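/- arXiv:2601.10881 — 3 statements merged into one kernel-verified Lean document; each statement's English description precedes it below -/
import Mathlib

section
/- Let K be an even positive integer and let G be a K-edge-connected finite simple graph. Let ∂X and ∂Y be two crossing K-cuts of G. Then each of the four sets ∂X|_Y (edges of ∂X with both endpoints in Y), ∂X|_{V∖Y}, ∂Y|_X, and ∂Y|_{V∖X} has exactly K/2 edges. Moreover, G has no edges between X∩Y and (V∖X)∩(V∖Y), and no edges between X∩(V∖Y) and (V∖X)∩Y. -/
open SimpleGraph

variable {V : Type*}

/-- The cut `∂X`: the set of edges of `G` with exactly one endpoint in `X`. -/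
def cutEdges (G : SimpleGraph V) (X : Set V) : Set (Sym2 V) :=
  {e | e ∈ G.edgeSet ∧ ∃ u v, e = s(u, v) ∧ u ∈ X ∧ v ∉ X}

/-- `G` is `K`-edge-connected: at least two vertices, connected, and every cut has
at least `K` edges. -/
def KEdgeConnected (G : SimpleGraph V) (K : ℕ) : Prop :=
  Nontrivial V ∧ G.Connected ∧
    ∀ X : Set V, X.Nonempty → X ≠ Set.univ → K ≤ (cutEdges G X).ncard

/-- `∂X` is a `K`-cut. -/
def IsKCut (G : SimpleGraph V) (K : ℕ) (X : Set V) : Prop :=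
  X.Nonempty ∧ X ≠ Set.univ ∧ (cutEdges G X).ncard = K

/-- The cuts `∂X` and `∂Y` cross. -/
def Crossing (X Y : Set V) : Prop :=
  (X ∩ Y).Nonempty ∧ (X ∩ Yᶜ).Nonempty ∧ (Xᶜ ∩ Y).Nonempty ∧ (Xᶜ ∩ Yᶜ).Nonempty

/-- The set of vertices reachable from `u` in `T` after deleting the edge `e`;
for a spanning tree `T` and an edge `e` of `T` with endpoint `u`, this is the shore
of the cut induced by `e` containing `u`. -/
def treeSide (T : SimpleGraph V) (u : V) (e : Sym2 V) : Set V :=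
  {x | (T.deleteEdges {e}).Reachable u x}

/-- The congestion of the edge `(u,v)` of a spanning tree `T` of `G`. -/
noncomputable def edgeCong (G T : SimpleGraph V) (u v : V) : ℕ :=
  (cutEdges G (treeSide T u s(u, v))).ncard

/-- The spanning tree `T` of `G` has congestion at most `K`. -/
def CongAtMost (G T : SimpleGraph V) (K : ℕ) : Prop :=
  ∀ u v, T.Adj u v → edgeCong G T u v ≤ K

/-- The congestion of a spanning tree `T` of `G`. -/
noncomputable def treeCongestion (G T : SimpleGraph V) : ℕ :=
  sSup {n | ∃ u v, T.Adj u v ∧ n = edgeCong G T u v}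

/-- The spanning-tree congestion of `G`. -/
noncomputable def stc (G : SimpleGraph V) : ℕ :=
  sInf {n | ∃ T : SimpleGraph V, T ≤ G ∧ T.IsTree ∧ treeCongestion G T = n}

/-- `T_out(w,e)`: the vertex set of the component of the tree `H − e` not containing `w`
(the vertices of `H` that are no longer reachable from `w` after deleting `e`). -/
def treeOut (G : SimpleGraph V) (H : G.Subgraph) (w : V) (e : Sym2 V) : Set V :=
  {x ∈ H.verts | ¬ (H.deleteEdges {e}).spanningCoe.Reachable w x}

/-- The rooted tree `(H, w)` is safe (with parameter `K`). -/
def SafeTree (G : SimpleGraph V) (K : ℕ) (H : G.Subgraph) (w : V) : Prop :=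
  ∀ e ∈ H.edgeSet, (cutEdges G (treeOut G H w e)).ncard = K

/-- `V(∂X)`: the set of endpoints of edges of the cut `∂X`. -/
def cutVerts (G : SimpleGraph V) (X : Set V) : Set V :=
  {v | ∃ e ∈ cutEdges G X, v ∈ e}

/-- `w` is a hub for `Z`: `w ∈ V(∂Z)` and there is a spanning tree `H` of the subgraph
of `G` induced by `Z ∪ {w}` such that `(H, w)` is a safe tree. -/
def IsHub (G : SimpleGraph V) (K : ℕ) (Z : Set V) (w : V) : Prop :=
  w ∈ cutVerts G Z ∧
    ∃ H : G.Subgraph, H.verts = Z ∪ {w} ∧ H.coe.IsTree ∧ SafeTree G K H w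

/-- `H̃(Z)`: the set of all hubs for `Z`. -/
def hubSet (G : SimpleGraph V) (K : ℕ) (Z : Set V) : Set V :=
  {w | IsHub G K Z w}

/-- `N(S)`: the set of vertices adjacent in `G` to some vertex of `S`. -/
def nbrSet (G : SimpleGraph V) (S : Set V) : Set V :=
  {v | ∃ u ∈ S, G.Adj u v}

/-- Edges of `∂X` with both endpoints in `S`. -/
def cutRestrict (G : SimpleGraph V) (X S : Set V) : Set (Sym2 V) :=
  {e ∈ cutEdges G X | ∀ v ∈ e, v ∈ S}

/-! Write `A, B, C, D` for the quadrants `X ∩ Y, X ∩ Yᶜ, Xᶜ ∩ Y, Xᶜ ∩ Yᶜ` and `ab, ac, …` for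
the numbers of edges between them. All six cuts `∂X, ∂Y, ∂A, …, ∂D` are sums of these numbers.
The quadrants are nonempty proper subsets, so `|∂A| + |∂D| ≥ 2K = |∂X| + |∂Y|`, which leaves no
room for edges between `B` and `C`; likewise `|∂B| + |∂C| ≥ 2K` kills the edges between `A`
and `D`. What remains is `ac + bd = ab + cd = K` together with `ab + ac, ab + bd, ac + cd,
bd + cd ≥ K`, and this forces all four numbers to equal `K / 2`. -/

def edgesBetween (G : SimpleGraph V) (P Q : Set V) : Set (Sym2 V) :=
  {e | e ∈ G.edgeSet ∧ ∃ u v, e = s(u, v) ∧ u ∈ P ∧ v ∈ Q}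

section EdgesBetween

variable (G : SimpleGraph V) {P Q R : Set V}

theorem cutEdges_eq_edgesBetween (X : Set V) : cutEdges G X = edgesBetween G X Xᶜ := rfl

theorem edgesBetween_comm (P Q : Set V) : edgesBetween G P Q = edgesBetween G Q P := by
  ext e
  constructor <;> rintro ⟨he, u, v, rfl, hu, hv⟩ <;> exact ⟨he, v, u, Sym2.eq_swap, hv, hu⟩

theorem edgesBetween_union_right (P Q R : Set V) :
    edgesBetween G P (Q ∪ R) = edgesBetween G P Q ∪ edgesBetween G P R := by
  ext e
  constructor
  · rintro ⟨he, u, v, rfl, hu, hv | hv⟩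
    exacts [Or.inl ⟨he, u, v, rfl, hu, hv⟩, Or.inr ⟨he, u, v, rfl, hu, hv⟩]
  · rintro (⟨he, u, v, rfl, hu, hv⟩ | ⟨he, u, v, rfl, hu, hv⟩)
    exacts [⟨he, u, v, rfl, hu, Or.inl hv⟩, ⟨he, u, v, rfl, hu, Or.inr hv⟩]

theorem disjoint_edgesBetween_right (hPR : Disjoint P R) (hQR : Disjoint Q R) :
    Disjoint (edgesBetween G P Q) (edgesBetween G P R) := by
  rw [Set.disjoint_left]
  rintro e ⟨-, u, v, rfl, hu, hv⟩ ⟨-, u', v', huv, hu', hv'⟩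
  rcases Sym2.eq_iff.mp huv with ⟨rfl, rfl⟩ | ⟨rfl, rfl⟩
  exacts [hQR.notMem_of_mem_left hv hv', hPR.notMem_of_mem_left hu hv']

theorem ncard_edgesBetween_union_right [Finite V] (hPR : Disjoint P R) (hQR : Disjoint Q R) :
    (edgesBetween G P (Q ∪ R)).ncard =
      (edgesBetween G P Q).ncard + (edgesBetween G P R).ncard := by
  rw [edgesBetween_union_right, Set.ncard_union_eq (disjoint_edgesBetween_right G hPR hQR)]

theorem ncard_edgesBetween_union_left [Finite V] (hPQ : Disjoint P Q) (hQR : Disjoint Q R) :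
    (edgesBetween G (P ∪ Q) R).ncard =
      (edgesBetween G P R).ncard + (edgesBetween G Q R).ncard := by
  rw [edgesBetween_comm G (P ∪ Q), ncard_edgesBetween_union_right G hQR.symm hPQ,
    edgesBetween_comm G R, edgesBetween_comm G R]

theorem edgesBetween_eq_empty_iff :
    edgesBetween G P Q = ∅ ↔ ∀ u v, G.Adj u v → u ∈ P → v ∉ Q := by
  simp only [Set.eq_empty_iff_forall_notMem, edgesBetween, Set.mem_ofPred_eq]
  constructor
  · exact fun h u v huv hu hv ↦ h _ ⟨huv, u, v, rfl, hu, hv⟩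
  · rintro h e ⟨he, u, v, rfl, hu, hv⟩
    exact h u v he hu hv

theorem cutRestrict_eq_edgesBetween (X S : Set V) :
    cutRestrict G X S = edgesBetween G (X ∩ S) (Xᶜ ∩ S) := by
  ext e
  constructor
  · rintro ⟨⟨he, u, v, rfl, hu, hv⟩, hS⟩
    exact ⟨he, u, v, rfl, ⟨hu, hS u (Sym2.mem_mk_left u v)⟩, hv, hS v (Sym2.mem_mk_right u v)⟩
  · rintro ⟨he, u, v, rfl, ⟨hu, huS⟩, hv, hvS⟩
    refine ⟨⟨he, u, v, rfl, hu, hv⟩, fun w hw ↦ ?_⟩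
    rcases Sym2.mem_iff.mp hw with rfl | rfl
    exacts [huS, hvS]

end EdgesBetween

section Quadrants

variable [Finite V] (G : SimpleGraph V) (X Y : Set V)

theorem ncard_cutEdges_eq_sum_quadrants :
    (cutEdges G X).ncard =
      (edgesBetween G (X ∩ Y) (Xᶜ ∩ Y)).ncard + (edgesBetween G (X ∩ Y) (Xᶜ ∩ Yᶜ)).ncard +
        (edgesBetween G (X ∩ Yᶜ) (Xᶜ ∩ Y)).ncard +
          (edgesBetween G (X ∩ Yᶜ) (Xᶜ ∩ Yᶜ)).ncard := by
  calc (cutEdges G X).ncard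
      = (edgesBetween G (X ∩ Y ∪ X ∩ Yᶜ) (Xᶜ ∩ Y ∪ Xᶜ ∩ Yᶜ)).ncard := by
        rw [Set.inter_union_compl, Set.inter_union_compl, cutEdges_eq_edgesBetween]
    _ = _ := by
        rw [ncard_edgesBetween_union_left, ncard_edgesBetween_union_right,
          ncard_edgesBetween_union_right, ← add_assoc]
        all_goals tauto_set

theorem ncard_cutEdges_inter :
    (cutEdges G (X ∩ Y)).ncard =
      (edgesBetween G (X ∩ Y) (X ∩ Yᶜ)).ncard + (edgesBetween G (X ∩ Y) (Xᶜ ∩ Y)).ncard +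
        (edgesBetween G (X ∩ Y) (Xᶜ ∩ Yᶜ)).ncard := by
  rw [cutEdges_eq_edgesBetween, show (X ∩ Y)ᶜ = X ∩ Yᶜ ∪ (Xᶜ ∩ Y ∪ Xᶜ ∩ Yᶜ) by tauto_set,
    ncard_edgesBetween_union_right, ncard_edgesBetween_union_right, add_assoc]
  all_goals tauto_set

end Quadrants

theorem Crossing.quadrant_edge_counts [Finite V] {G : SimpleGraph V} {K : ℕ} {X Y : Set V}
    (hXY : Crossing X Y)
    (hG : ∀ S : Set V, S.Nonempty → S ≠ Set.univ → K ≤ (cutEdges G S).ncard)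
    (hX : (cutEdges G X).ncard = K) (hY : (cutEdges G Y).ncard = K) :
    2 * (edgesBetween G (X ∩ Y) (Xᶜ ∩ Y)).ncard = K ∧
      2 * (edgesBetween G (X ∩ Yᶜ) (Xᶜ ∩ Yᶜ)).ncard = K ∧
      2 * (edgesBetween G (X ∩ Y) (X ∩ Yᶜ)).ncard = K ∧
      2 * (edgesBetween G (Xᶜ ∩ Y) (Xᶜ ∩ Yᶜ)).ncard = K ∧
      edgesBetween G (X ∩ Y) (Xᶜ ∩ Yᶜ) = ∅ ∧ edgesBetween G (X ∩ Yᶜ) (Xᶜ ∩ Y) = ∅ := by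
  obtain ⟨hA, hB, hC, hD⟩ := hXY
  have hA' := hG _ hA (Set.nonempty_compl.mp (hD.mono (by tauto_set)))
  have hB' := hG _ hB (Set.nonempty_compl.mp (hC.mono (by tauto_set)))
  have hC' := hG _ hC (Set.nonempty_compl.mp (hB.mono (by tauto_set)))
  have hD' := hG _ hD (Set.nonempty_compl.mp (hA.mono (by tauto_set)))
  rw [ncard_cutEdges_inter] at hA' hB' hC' hD'
  rw [ncard_cutEdges_eq_sum_quadrants G X Y] at hX
  rw [ncard_cutEdges_eq_sum_quadrants G Y X, Set.inter_comm Y X, Set.inter_comm Yᶜ X,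
    Set.inter_comm Y Xᶜ, Set.inter_comm Yᶜ Xᶜ] at hY
  simp only [compl_compl, edgesBetween_comm G (X ∩ Yᶜ) (X ∩ Y),
    edgesBetween_comm G (Xᶜ ∩ Y) (X ∩ Y), edgesBetween_comm G (Xᶜ ∩ Y) (X ∩ Yᶜ),
    edgesBetween_comm G (Xᶜ ∩ Yᶜ)] at hY hB' hC' hD'
  refine ⟨by omega, by omega, by omega, by omega, ?_, ?_⟩ <;>
    exact (Set.ncard_eq_zero).mp (by omega)

theorem even_K_crossing_cuts_general {V : Type*} [Fintype V] (K : ℕ)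
    (G : SimpleGraph V) (hG : KEdgeConnected G K)
    (X Y : Set V) (hX : IsKCut G K X) (hY : IsKCut G K Y) (hXY : Crossing X Y) :
    (cutRestrict G X Y).ncard = K / 2 ∧
    (cutRestrict G X Yᶜ).ncard = K / 2 ∧
    (cutRestrict G Y X).ncard = K / 2 ∧
    (cutRestrict G Y Xᶜ).ncard = K / 2 ∧
    (∀ u v, G.Adj u v → u ∈ X ∩ Y → v ∉ Xᶜ ∩ Yᶜ) ∧
    (∀ u v, G.Adj u v → u ∈ X ∩ Yᶜ → v ∉ Xᶜ ∩ Y) := by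
  obtain ⟨hAC, hBD, hAB, hCD, hAD, hBC⟩ := hXY.quadrant_edge_counts hG.2.2 hX.2.2 hY.2.2
  rw [edgesBetween_eq_empty_iff] at hAD hBC
  simp only [cutRestrict_eq_edgesBetween, Set.inter_comm Y X, Set.inter_comm Yᶜ X,
    Set.inter_comm Y Xᶜ, Set.inter_comm Yᶜ Xᶜ]
  exact ⟨by omega, by omega, by omega, by omega, hAD, hBC⟩

/-- If `K` is even and `G` is `K`-edge-connected and `∂X`, `∂Y` are
crossing `K`-cuts, then the four restricted cuts each have exactly `K/2` edges, and
there are no edges between `X∩Y` and `Xᶜ∩Yᶜ`, nor between `X∩Yᶜ` and `Xᶜ∩Y`. -/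
theorem even_K_crossing_cuts {V : Type*} [Fintype V] (K : ℕ) (hKpos : 0 < K)
    (hKeven : Even K) (G : SimpleGraph V) (hG : KEdgeConnected G K)
    (X Y : Set V) (hX : IsKCut G K X) (hY : IsKCut G K Y) (hXY : Crossing X Y) :
    (cutRestrict G X Y).ncard = K / 2 ∧
    (cutRestrict G X Yᶜ).ncard = K / 2 ∧
    (cutRestrict G Y X).ncard = K / 2 ∧
    (cutRestrict G Y Xᶜ).ncard = K / 2 ∧
    (∀ u v, G.Adj u v → u ∈ X ∩ Y → v ∉ Xᶜ ∩ Yᶜ) ∧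
    (∀ u v, G.Adj u v → u ∈ X ∩ Yᶜ → v ∉ Xᶜ ∩ Y) :=
  even_K_crossing_cuts_general K G hG X Y hX hY hXY
end

section
/- Let G be a K-edge-connected finite simple graph and let T̃ be a spanning tree of G with congestion at most K. Let Z_1, ..., Z_d be pairwise disjoint nonempty vertex sets whose union is V(G), such that each ∂Z_i is a K-cut of G, and such that for every K-cut ∂Y of G there exists an index j with Y ⊆ Z_j or V(G)∖Y ⊆ Z_j. Then there exists an index j and a vertex w ∈ Z_j such that every edge of T̃ that belongs to some ∂Z_i is incident to w; that is, T̃ ∩ (∂Z_1 ∪ ... ∪ ∂Z_d) ⊆ E_w. -/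
open SimpleGraph

variable {V : Type*}

/-!
Call a side of a tree edge *small* if it lies inside one of the parts `Z j`. Every side of an
edge of `T̃` is a `K`-cut (its congestion is at most `K` and `G` is `K`-edge-connected), so every
edge of `T̃` has a small side. Take a small side `C`, of the edge `u₀v₀` and on the side of `v₀`,
of maximal size. If an edge `uv` of `T̃` joins two different parts and `u₀` lies on the side of
`u`, but `u ≠ u₀`, let `uw` be the first edge of the path from `u` to `u₀`. The side of `u` of
`uw` contains both `u` and `v`, so it is not small; hence the side of `w` is small, and it
contains `C` and `u₀ ∉ C`, contradicting maximality. So every such edge is incident to `u₀`.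
-/

open SimpleGraph Function

section TreeSide

variable {T : SimpleGraph V}

lemma self_mem_treeSide (a : V) (e : Sym2 V) : a ∈ treeSide T a e :=
  Reachable.refl a

lemma mem_treeSide_of_adj {a x y : V} {e : Sym2 V} (hx : x ∈ treeSide T a e)
    (hxy : T.Adj x y) (he : s(x, y) ≠ e) : y ∈ treeSide T a e :=
  hx.trans (deleteEdges_adj.mpr ⟨hxy, he⟩).reachable

lemma treeSide_subset_of_mem {a b : V} {e : Sym2 V} (hb : b ∈ treeSide T a e) :
    treeSide T b e ⊆ treeSide T a e :=
  fun _ hx => hb.trans hx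

lemma mem_of_reachable_of_adj_closed {S : Set V} (hS : ∀ a b, T.Adj a b → a ∈ S → b ∈ S)
    {a x : V} (hax : T.Reachable a x) (ha : a ∈ S) : x ∈ S := by
  obtain ⟨p⟩ := hax
  induction p with
  | nil => exact ha
  | cons hab _ ih => exact ih (hS _ _ hab ha)

lemma mem_treeSide_or_mem_treeSide (hT : T.Connected) (u v x : V) :
    x ∈ treeSide T u s(u, v) ∨ x ∈ treeSide T v s(u, v) := by
  refine mem_of_reachable_of_adj_closed (S := treeSide T u s(u, v) ∪ treeSide T v s(u, v))
    (fun a b hab ha => ?_) (hT.preconnected u x) (Or.inl (self_mem_treeSide u _))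
  by_cases he : s(a, b) = s(u, v)
  · rcases Sym2.eq_iff.mp he with ⟨-, rfl⟩ | ⟨-, rfl⟩
    · exact Or.inr (self_mem_treeSide b _)
    · exact Or.inl (self_mem_treeSide b _)
  · exact ha.imp (mem_treeSide_of_adj · hab he) (mem_treeSide_of_adj · hab he)

lemma treeSide_compl (hT : T.IsTree) {u v : V} (huv : T.Adj u v) :
    treeSide T v s(u, v) = (treeSide T u s(u, v))ᶜ := by
  have hbridge := isBridge_iff.mp (isAcyclic_iff_forall_adj_isBridge.mp hT.isAcyclic huv)
  ext x
  refine ⟨fun hv hu => hbridge (hu.trans hv.symm), fun hu => ?_⟩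
  exact (mem_treeSide_or_mem_treeSide hT.connected u v x).resolve_left hu

lemma right_notMem_treeSide (hT : T.IsTree) {u v : V} (huv : T.Adj u v) :
    v ∉ treeSide T u s(u, v) := by
  rw [← Set.mem_compl_iff, ← treeSide_compl hT huv]
  exact self_mem_treeSide v _

lemma left_notMem_treeSide (hT : T.IsTree) {u v : V} (huv : T.Adj u v) :
    u ∉ treeSide T v s(u, v) := by
  rw [Sym2.eq_swap]
  exact right_notMem_treeSide hT huv.symm

lemma treeSide_subset_treeSide_of_notMem {a x y : V} {e : Sym2 V} (hx : x ∉ treeSide T a e) :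
    treeSide T a e ⊆ treeSide T a s(x, y) := by
  classical
  rintro c ⟨p⟩
  refine reachable_deleteEdges_iff_exists_walk.mpr ⟨p.mapLe (deleteEdges_le _), fun hxy => hx ?_⟩
  rw [Walk.edges_mapLe_eq_edges] at hxy
  exact ⟨p.takeUntil x (p.fst_mem_support_of_mem_edges hxy)⟩

lemma exists_adj_mem_treeSide {u x : V} {e : Sym2 V} (hux : u ≠ x) (hx : x ∈ treeSide T u e) :
    ∃ w, T.Adj u w ∧ s(u, w) ≠ e ∧ x ∈ treeSide T w s(u, w) := by
  classical
  obtain ⟨p⟩ := hx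
  obtain ⟨q, hq⟩ := p.toPath
  cases q with
  | nil => exact absurd rfl hux
  | cons huw q =>
    rw [Walk.cons_isPath_iff] at hq
    obtain ⟨huw, hne⟩ := deleteEdges_adj.mp huw
    refine ⟨_, huw, hne, reachable_deleteEdges_iff_exists_walk.mpr
      ⟨q.mapLe (deleteEdges_le _), fun hmem => hq.2 ?_⟩⟩
    rw [Walk.edges_mapLe_eq_edges] at hmem
    exact q.fst_mem_support_of_mem_edges hmem

end TreeSide

section Cuts

variable {G T : SimpleGraph V} {K : ℕ} {ι : Type*} {Z : ι → Set V}

lemma not_exists_mem_and_mem_of_mem_iUnion_cutEdges (hdisj : Pairwise (Disjoint on Z))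
    {u v : V} (h : s(u, v) ∈ ⋃ i, cutEdges G (Z i)) : ¬ ∃ j, u ∈ Z j ∧ v ∈ Z j := by
  rintro ⟨j, hu, hv⟩
  obtain ⟨i, -, a, b, hab, ha, hb⟩ := Set.mem_iUnion.mp h
  have hZ : ∀ x ∈ s(a, b), x ∈ Z j := by
    rw [← hab]
    intro x hx
    rcases Sym2.mem_iff.mp hx with rfl | rfl <;> assumption
  obtain rfl : i = j :=
    hdisj.eq (Set.not_disjoint_iff.mpr ⟨a, ha, hZ a (Sym2.mem_mk_left a b)⟩)
  exact hb (hZ b (Sym2.mem_mk_right a b))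

lemma isKCut_treeSide (hG : KEdgeConnected G K) (hT : T.IsTree) (hcong : CongAtMost G T K)
    {u v : V} (huv : T.Adj u v) : IsKCut G K (treeSide T u s(u, v)) := by
  have hne : (treeSide T u s(u, v)).Nonempty := ⟨u, self_mem_treeSide u _⟩
  have huniv : treeSide T u s(u, v) ≠ Set.univ :=
    fun h => right_notMem_treeSide hT huv (h ▸ Set.mem_univ v)
  exact ⟨hne, huniv, (hcong u v huv).antisymm (hG.2.2 _ hne huniv)⟩

variable (hG : KEdgeConnected G K) (hT : T.IsTree) (hcong : CongAtMost G T K)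
  (hlam : ∀ Y : Set V, IsKCut G K Y → ∃ j, Y ⊆ Z j ∨ Yᶜ ⊆ Z j)
include hG hT hcong hlam

lemma exists_treeSide_subset {u v : V} (huv : T.Adj u v) :
    ∃ j, treeSide T u s(u, v) ⊆ Z j ∨ treeSide T v s(u, v) ⊆ Z j := by
  rw [treeSide_compl hT huv]
  exact hlam _ (isKCut_treeSide hG hT hcong huv)

lemma eq_of_mem_treeSide_of_maximal [Finite V] {u₀ v₀ : V} {j₀ : ι} (h₀ : T.Adj u₀ v₀)
    (hC : treeSide T v₀ s(u₀, v₀) ⊆ Z j₀)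
    (hmax : ∀ a b, T.Adj a b → (∃ j, treeSide T b s(a, b) ⊆ Z j) →
      (treeSide T b s(a, b)).ncard ≤ (treeSide T v₀ s(u₀, v₀)).ncard)
    {u v : V} (huv : T.Adj u v) (hsep : ¬ ∃ j, u ∈ Z j ∧ v ∈ Z j)
    (hu₀ : u₀ ∈ treeSide T u s(u, v)) : u = u₀ := by
  by_contra hne
  obtain ⟨w, huw, hwv, hu₀w⟩ := exists_adj_mem_treeSide hne hu₀
  have huv₀ : s(u, v) ≠ s(u₀, v₀) := by
    intro h
    rcases Sym2.eq_iff.mp h with ⟨rfl, -⟩ | ⟨-, rfl⟩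
    · exact hne rfl
    · exact right_notMem_treeSide hT huv hu₀
  have huC : u ∉ treeSide T v₀ s(u₀, v₀) :=
    fun h => hsep ⟨j₀, hC h, hC (mem_treeSide_of_adj h huv huv₀)⟩
  obtain ⟨k, hk | hk⟩ := exists_treeSide_subset hG hT hcong hlam huw
  · exact hsep ⟨k, hk (self_mem_treeSide u _),
      hk (mem_treeSide_of_adj (self_mem_treeSide u _) huv hwv.symm)⟩
  · have hwu₀ : s(u₀, v₀) ≠ s(u, w) := by
      intro h
      rcases Sym2.eq_iff.mp h with ⟨rfl, -⟩ | ⟨-, rfl⟩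
      · exact hne rfl
      · exact huC (self_mem_treeSide v₀ _)
    have hCS : treeSide T v₀ s(u₀, v₀) ⊂ treeSide T w s(u, w) :=
      ⟨(treeSide_subset_treeSide_of_notMem huC).trans
        (treeSide_subset_of_mem (mem_treeSide_of_adj hu₀w h₀ hwu₀)),
        fun h => left_notMem_treeSide hT h₀ (h hu₀w)⟩
    exact (Set.ncard_lt_ncard hCS (Set.toFinite _)).not_ge (hmax u w huw ⟨k, hk⟩)

end Cuts

theorem tree_edges_in_basic_cuts_incident_type0_general {V : Type*} [Fintype V] (K : ℕ)
    (G : SimpleGraph V) (hG : KEdgeConnected G K)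
    (T : SimpleGraph V) (hTtree : T.IsTree) (hTcong : CongAtMost G T K)
    (d : ℕ) (Z : Fin d → Set V)
    (hdisj : ∀ i j, i ≠ j → Disjoint (Z i) (Z j))
    (hunion : (⋃ i, Z i) = Set.univ)
    (hlam : ∀ Y : Set V, IsKCut G K Y → ∃ j, Y ⊆ Z j ∨ Yᶜ ⊆ Z j) :
    ∃ j : Fin d, ∃ w ∈ Z j,
      ∀ u v : V, T.Adj u v → s(u, v) ∈ ⋃ i, cutEdges G (Z i) → u = w ∨ v = w := by
  have : Nontrivial V := hG.1
  obtain ⟨x, y, hxy⟩ : ∃ x y, T.Adj x y :=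
    ⟨_, hTtree.connected.preconnected.exists_adj_of_nontrivial (Classical.arbitrary V)⟩
  let smallSides : Set (V × V) := {p | T.Adj p.1 p.2 ∧ ∃ j, treeSide T p.2 s(p.1, p.2) ⊆ Z j}
  have hsmall : smallSides.Nonempty := by
    obtain ⟨j, hj | hj⟩ := exists_treeSide_subset hG hTtree hTcong hlam hxy
    · exact ⟨(y, x), hxy.symm, j, by rwa [Sym2.eq_swap]⟩
    · exact ⟨(x, y), hxy, j, hj⟩
  obtain ⟨⟨u₀, v₀⟩, ⟨h₀, j₀, hC⟩, hmax⟩ := smallSides.exists_max_image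
    (fun p => (treeSide T p.2 s(p.1, p.2)).ncard) smallSides.toFinite hsmall
  have key {u v : V} (huv : T.Adj u v) :=
    eq_of_mem_treeSide_of_maximal hG hTtree hTcong hlam h₀ hC
      (fun a b hab hs => hmax (a, b) ⟨hab, hs⟩) huv
  obtain ⟨j, hj⟩ := Set.mem_iUnion.mp (hunion ▸ Set.mem_univ u₀)
  refine ⟨j, u₀, hj, fun u v huv hcut => ?_⟩
  have hsep := not_exists_mem_and_mem_of_mem_iUnion_cutEdges hdisj hcut
  rcases mem_treeSide_or_mem_treeSide hTtree.connected u v u₀ with h | h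
  · exact Or.inl (key huv hsep h)
  · rw [Sym2.eq_swap] at h
    exact Or.inr (key huv.symm (fun ⟨j, hv, hu⟩ => hsep ⟨j, hu, hv⟩) h)

/-- (Lemma: basic `K`-cuts associated with a Type-0 node.) If
`Z_1, …, Z_d` partition `V` into `K`-cuts such that every `K`-cut has a shore inside
some `Z_j`, then there is an index `j` and a vertex `w ∈ Z_j` such that every edge of
a congestion-`K` spanning tree `T̃` crossing some `∂Z_i` is incident to `w`. -/
theorem tree_edges_in_basic_cuts_incident_type0 {V : Type*} [Fintype V] (K : ℕ)
    (G : SimpleGraph V) (hG : KEdgeConnected G K)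
    (T : SimpleGraph V) (hTle : T ≤ G) (hTtree : T.IsTree) (hTcong : CongAtMost G T K)
    (d : ℕ) (Z : Fin d → Set V)
    (hdisj : ∀ i j, i ≠ j → Disjoint (Z i) (Z j))
    (hne : ∀ i, (Z i).Nonempty)
    (hunion : (⋃ i, Z i) = Set.univ)
    (hcuts : ∀ i, IsKCut G K (Z i))
    (hlam : ∀ Y : Set V, IsKCut G K Y → ∃ j, Y ⊆ Z j ∨ Yᶜ ⊆ Z j) :
    ∃ j : Fin d, ∃ w ∈ Z j,
      ∀ u v : V, T.Adj u v → s(u, v) ∈ ⋃ i, cutEdges G (Z i) → u = w ∨ v = w :=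
  tree_edges_in_basic_cuts_incident_type0_general K G hG T hTtree hTcong d Z hdisj hunion hlam
end

section
/- Let G be a finite simple graph, let ∂Z be a K-cut of G that does not cross any K-cut of G, and let (T, w) be a safe tree in G (with parameter K) such that T ∩ ∂Z ≠ ∅. Then all edges of T ∩ ∂Z have a common endpoint; that is, there is a vertex x of G such that every edge of T belonging to ∂Z is incident to x. -/
open SimpleGraph

variable {V : Type*}

/-!
If two edges `ab` and `cd` of `T ∩ ∂Z` (with `a, c ∈ Z`) were disjoint, pick an edge `g` on the
tree path from `a` to `c` other than `ab` and `cd`. Deleting the bridge `g` splits the component of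
`w` into two sides, one of which is `T_out(w, g)`; it contains `ab` or `cd` entirely and misses
the other. So `T_out(w, g)`, a `K`-cut by safety, crosses `∂Z`. Hence the edges of `T ∩ ∂Z`
pairwise meet, and pairwise meeting edges of a triangle-free graph share a vertex.
-/

namespace SimpleGraph

variable {α : Type*} {T : SimpleGraph α}

lemma Walk.reachable_deleteEdges_or (p q : α) {u v : α} (W : T.Walk u v) :
    (T.deleteEdges {s(p, q)}).Reachable u v ∨
      (T.deleteEdges {s(p, q)}).Reachable u p ∧ (T.deleteEdges {s(p, q)}).Reachable q v ∨
      (T.deleteEdges {s(p, q)}).Reachable u q ∧ (T.deleteEdges {s(p, q)}).Reachable p v := by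
  induction W with
  | nil => exact .inl .rfl
  | @cons u x v hux W ih =>
    by_cases hg : s(u, x) = s(p, q)
    · rcases Sym2.eq_iff.mp hg with ⟨rfl, rfl⟩ | ⟨rfl, rfl⟩ <;> grind [Reachable.refl]
    · have hux' : (T.deleteEdges {s(p, q)}).Reachable u x :=
        (deleteEdges_adj.mpr ⟨hux, hg⟩).reachable
      grind [Reachable.trans]

lemma reachable_deleteEdges_of_not_reachable {w u v : α} {g : Sym2 α}
    (hu : T.Reachable w u) (hv : T.Reachable w v)
    (hwu : ¬ (T.deleteEdges {g}).Reachable w u) (hwv : ¬ (T.deleteEdges {g}).Reachable w v) :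
    (T.deleteEdges {g}).Reachable u v := by
  induction g using Sym2.ind with
  | _ p q =>
  obtain ⟨Wu⟩ := hu
  obtain ⟨Wv⟩ := hv
  have := Wu.reachable_deleteEdges_or p q
  have := Wv.reachable_deleteEdges_or p q
  grind [Reachable.trans, Reachable.symm]

lemma IsAcyclic.not_reachable_deleteEdges_of_mem_edges (hT : T.IsAcyclic) {u v : α}
    {P : T.Walk u v} (hP : P.IsPath) {g : Sym2 α} (hg : g ∈ P.edges) :
    ¬ (T.deleteEdges {g}).Reachable u v := by
  classical
  induction g using Sym2.ind with
  | _ p q =>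
  rw [reachable_deleteEdges_iff_exists_walk]
  rintro ⟨W, hW⟩
  have hPW : P = W.bypass :=
    congrArg Subtype.val ((hT.subsingleton_path u v).elim ⟨P, hP⟩ W.toPath)
  exact hW (W.edges_bypass_subset_edges (hPW ▸ hg))

lemma Walk.exists_mem_edges_ne_ne {e f : Sym2 α} (hef : ∀ x ∈ e, x ∉ f) {u v : α}
    (W : T.Walk u v) (hu : u ∈ e) (hv : v ∈ f) : ∃ g ∈ W.edges, g ≠ e ∧ g ≠ f := by
  induction W with
  | nil => exact absurd hv (hef _ hu)
  | @cons u x v hux W ih =>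
    by_cases he : s(u, x) = e
    · obtain ⟨g, hg, hge, hgf⟩ := ih (he ▸ Sym2.mem_mk_right u x) hv
      exact ⟨g, List.mem_cons_of_mem _ hg, hge, hgf⟩
    · exact ⟨s(u, x), List.mem_cons_self, he, fun hf => hef u hu (hf ▸ Sym2.mem_mk_left u x)⟩

lemma IsAcyclic.exists_edge_separating (hT : T.IsAcyclic) {w a b c d : α}
    (hab : T.Adj a b) (hcd : T.Adj c d) (hdisj : ∀ x ∈ s(a, b), x ∉ s(c, d))
    (hwa : T.Reachable w a) (hwc : T.Reachable w c) :
    ∃ g ∈ T.edgeSet,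
      ((T.deleteEdges {g}).Reachable w a ↔ (T.deleteEdges {g}).Reachable w b) ∧
      ((T.deleteEdges {g}).Reachable w c ↔ (T.deleteEdges {g}).Reachable w d) ∧
      ((T.deleteEdges {g}).Reachable w a ↔ ¬ (T.deleteEdges {g}).Reachable w c) := by
  classical
  obtain ⟨W⟩ := hwa.symm.trans hwc
  obtain ⟨g, hgW, hgab, hgcd⟩ :=
    W.bypass.exists_mem_edges_ne_ne hdisj (Sym2.mem_mk_left a b) (Sym2.mem_mk_left c d)
  have hac : ¬ (T.deleteEdges {g}).Reachable a c :=
    hT.not_reachable_deleteEdges_of_mem_edges W.bypass_isPath hgW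
  have hside : ∀ {x y}, T.Adj x y → s(x, y) ≠ g →
      ((T.deleteEdges {g}).Reachable w x ↔ (T.deleteEdges {g}).Reachable w y) := by
    intro x y hxy hne
    have hxy' : (T.deleteEdges {g}).Reachable x y := (deleteEdges_adj.mpr ⟨hxy, hne⟩).reachable
    exact ⟨fun h => h.trans hxy', fun h => h.trans hxy'.symm⟩
  refine ⟨g, W.bypass.edges_subset_edgeSet hgW, hside hab hgab.symm, hside hcd hgcd.symm,
    fun hwa' hwc' => hac (hwa'.symm.trans hwc'), fun hwc' => ?_⟩
  by_contra hwa'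
  exact hac (reachable_deleteEdges_of_not_reachable hwa hwc hwa' hwc')

lemma IsAcyclic.cliqueFree_three (hT : T.IsAcyclic) : T.CliqueFree 3 := by
  classical
  intro s hs
  obtain ⟨a, b, c, hab, hac, hbc, -⟩ := is3Clique_iff.mp hs
  have hbridge := isAcyclic_iff_forall_adj_isBridge.mp hT hab
  rw [isBridge_iff_forall_walk_mem_edges] at hbridge
  simpa [hab.ne, hac.ne, hbc.ne] using hbridge (.cons hac (.cons hbc.symm .nil))

lemma CliqueFree.exists_forall_mem_of_forall_exists_mem [Nonempty α] (hT : T.CliqueFree 3)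
    {S : Set (Sym2 α)} (hS : S ⊆ T.edgeSet) (hmeet : ∀ e ∈ S, ∀ f ∈ S, ∃ x, x ∈ e ∧ x ∈ f) :
    ∃ x, ∀ e ∈ S, x ∈ e := by
  classical
  rcases S.eq_empty_or_nonempty with rfl | ⟨e, he⟩
  · exact ⟨Classical.arbitrary α, by simp⟩
  induction e using Sym2.ind with
  | _ a b =>
  by_contra! hno
  obtain ⟨f, hf, haf⟩ := hno a
  obtain ⟨f', hf', hbf'⟩ := hno b
  have hbf : b ∈ f := by
    obtain ⟨x, hx, hxf⟩ := hmeet _ he f hf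
    rcases Sym2.mem_iff.mp hx with rfl | rfl
    exacts [absurd hxf haf, hxf]
  have haf' : a ∈ f' := by
    obtain ⟨x, hx, hxf⟩ := hmeet _ he f' hf'
    rcases Sym2.mem_iff.mp hx with rfl | rfl
    exacts [hxf, absurd hxf hbf']
  obtain ⟨y, rfl⟩ := Sym2.mem_iff_exists.mp hbf
  obtain ⟨y', rfl⟩ := Sym2.mem_iff_exists.mp haf'
  obtain ⟨z, hz, hz'⟩ := hmeet _ hf _ hf'
  have hy : y = y' := by simp only [Sym2.mem_iff] at hz hz' haf hbf'; grind
  subst hy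
  exact hT {a, b, y} (is3Clique_triple_iff.mpr ⟨hS he, hS hf', hS hf⟩)

lemma Subgraph.isAcyclic_spanningCoe {G : SimpleGraph α} {H : G.Subgraph}
    (h : H.coe.IsAcyclic) : H.spanningCoe.IsAcyclic := by
  intro v c hc
  have hsupp : ∀ x ∈ c.support, x ∈ H.verts := fun x hx => by
    obtain ⟨e, he, hxe⟩ := (Walk.mem_support_iff_exists_mem_edges_of_not_nil hc.not_nil).mp hx
    induction e using Sym2.ind with
    | _ a b =>
      have hab : H.Adj a b := c.edges_subset_edgeSet he
      rcases Sym2.mem_iff.mp hxe with rfl | rfl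
      exacts [hab.fst_mem, hab.snd_mem]
  have hc' : (c.induce H.verts hsupp).IsCycle := by
    rwa [← Walk.isCycle_map_iff_of_injective (f := (Embedding.induce H.verts).toHom)
      Subtype.val_injective, Walk.map_induce]
  exact h _ hc'

end SimpleGraph

lemma crossing_of_separates {Z X : Set V} {a b c d : V} (ha : a ∈ Z) (hb : b ∉ Z)
    (hc : c ∈ Z) (hd : d ∉ Z) (hab : a ∈ X ↔ b ∈ X) (hcd : c ∈ X ↔ d ∈ X)
    (hac : a ∈ X ↔ c ∉ X) : Crossing Z X := by
  by_cases haX : a ∈ X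
  · exact ⟨⟨a, ha, haX⟩, ⟨c, hc, hac.mp haX⟩, ⟨b, hb, hab.mp haX⟩,
      ⟨d, hd, mt hcd.mpr (hac.mp haX)⟩⟩
  · have hcX : c ∈ X := by tauto
    exact ⟨⟨c, hc, hcX⟩, ⟨a, ha, haX⟩, ⟨d, hd, hcd.mp hcX⟩, ⟨b, hb, mt hab.mpr haX⟩⟩

lemma mem_treeOut {G : SimpleGraph V} {H : G.Subgraph} {w x : V} {e : Sym2 V} :
    x ∈ treeOut G H w e ↔ x ∈ H.verts ∧ ¬ (H.spanningCoe.deleteEdges {e}).Reachable w x := by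
  rw [Subgraph.deleteEdges_spanningCoe_eq]
  rfl

lemma SafeTree.exists_mem_and_mem {K : ℕ} {G : SimpleGraph V} {Z : Set V}
    (hnc : ∀ Y, IsKCut G K Y → ¬ Crossing Z Y) {H : G.Subgraph} {w : V}
    (htree : H.coe.IsTree) (hw : w ∈ H.verts) (hsafe : SafeTree G K H w) {e f : Sym2 V}
    (he : e ∈ H.edgeSet ∩ cutEdges G Z) (hf : f ∈ H.edgeSet ∩ cutEdges G Z) :
    ∃ x, x ∈ e ∧ x ∈ f := by
  obtain ⟨hab, -, a, b, rfl, ha, hb⟩ := he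
  obtain ⟨hcd, -, c, d, rfl, hc, hd⟩ := hf
  rw [Subgraph.mem_edgeSet] at hab hcd
  by_contra! hdisj
  have hreach : ∀ x ∈ H.verts, H.spanningCoe.Reachable w x := fun x hx =>
    (htree.connected ⟨w, hw⟩ ⟨x, hx⟩).map H.coeEmbeddingSpanningCoe.toHom
  obtain ⟨g, hg, hsab, hscd, hsac⟩ :=
    (Subgraph.isAcyclic_spanningCoe htree.isAcyclic).exists_edge_separating hab hcd hdisj
      (hreach a hab.fst_mem) (hreach c hcd.fst_mem)
  have hcross : Crossing Z (treeOut G H w g) := by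
    refine crossing_of_separates ha hb hc hd ?_ ?_ ?_ <;>
      simp only [mem_treeOut, hab.fst_mem, hab.snd_mem, hcd.fst_mem, hcd.snd_mem, true_and]
    exacts [not_congr hsab, not_congr hscd, by tauto]
  have hw_out : w ∉ treeOut G H w g := fun h => (mem_treeOut.mp h).2 .rfl
  exact hnc _ ⟨hcross.1.mono Set.inter_subset_right, fun h => hw_out (h ▸ Set.mem_univ w),
    hsafe g (Subgraph.edgeSet_spanningCoe H ▸ hg)⟩ hcross

theorem safe_tree_common_endpoint_general {V : Type*} (K : ℕ) (G : SimpleGraph V)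
    (Z : Set V)
    (hnc : ∀ Y : Set V, IsKCut G K Y → ¬ Crossing Z Y)
    (H : G.Subgraph) (w : V) (htree : H.coe.IsTree) (hw : w ∈ H.verts)
    (hsafe : SafeTree G K H w) :
    ∃ x : V, ∀ e ∈ H.edgeSet ∩ cutEdges G Z, x ∈ e := by
  have : Nonempty V := ⟨w⟩
  have hsub : H.edgeSet ∩ cutEdges G Z ⊆ H.spanningCoe.edgeSet := by
    rw [Subgraph.edgeSet_spanningCoe]
    exact Set.inter_subset_left
  exact (Subgraph.isAcyclic_spanningCoe htree.isAcyclic).cliqueFree_three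
    |>.exists_forall_mem_of_forall_exists_mem hsub
      fun _ he _ hf => hsafe.exists_mem_and_mem hnc htree hw he hf

/-- If `∂Z` is a `K`-cut not crossing any `K`-cut and `(T, w)` is a
safe tree with `T ∩ ∂Z ≠ ∅`, then all edges of `T ∩ ∂Z` have a common endpoint. -/
theorem safe_tree_common_endpoint {V : Type*} [Fintype V] (K : ℕ) (G : SimpleGraph V)
    (Z : Set V) (hZ : IsKCut G K Z)
    (hnc : ∀ Y : Set V, IsKCut G K Y → ¬ Crossing Z Y)
    (H : G.Subgraph) (w : V) (htree : H.coe.IsTree) (hw : w ∈ H.verts)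
    (hsafe : SafeTree G K H w)
    (hne : (H.edgeSet ∩ cutEdges G Z).Nonempty) :
    ∃ x : V, ∀ e ∈ H.edgeSet ∩ cutEdges G Z, x ∈ e :=
  safe_tree_common_endpoint_general K G Z hnc H w htree hw hsafe
end
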